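/- For all x, y ∈ Cl(V,Q), p(xy) = p(yx), where p is the projection onto the scalar component (with respect to the basis {e_I} arising from a Q-orthogonal basis of V). -/

import Mathlib

open CliffordAlgebra

section Defs

variable {F V : Type*} [Field F] [AddCommGroup V] [Module F V]

/-- The monomial `e_I` associated to a multi-index `I`, realized as a finite set of
indices multiplied in increasing order (with `e_∅ = 1`). -/
noncomputable def eI (Qf : QuadraticForm F V) {n : ℕ} (b : Module.Basis (Fin n) F V)
    (s : Finset (Fin n)) : CliffordAlgebra Qf :=
  ((s.sort (· ≤ ·)).map fun i => ι Qf (b i)).prod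

/-- The conjugation anti-automorphism `c = α ∘ τ` of the Clifford algebra. -/
noncomputable def cconj (Qf : QuadraticForm F V) :
    CliffordAlgebra Qf →ₗ[F] CliffordAlgebra Qf :=
  involute.toLinearMap ∘ₗ (reverse (Q := Qf))

/-- The canonical bilinear form `Q̄(x,y) = p(x · c(y))`, where `p` is the scalar-component
projection determined by a monomial basis `bas` (indexed by multi-indices, with
`bas s = e_s`, in particular `bas ∅ = 1`). -/
noncomputable def Qbar {Qf : QuadraticForm F V} {n : ℕ}
    (bas : Module.Basis (Finset (Fin n)) F (CliffordAlgebra Qf))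
    (x y : CliffordAlgebra Qf) : F :=
  bas.coord ∅ (x * cconj Qf y)

/-- The Lie algebra `G = {ξ : c(ξ) = -ξ}` of infinitesimal isometries, as a submodule. -/
noncomputable def Gsub (Qf : QuadraticForm F V) : Submodule F (CliffordAlgebra Qf) :=
  LinearMap.ker (cconj Qf + LinearMap.id)

end Defs

/-! With respect to a `Qf`-orthogonal basis the monomials multiply as
`e_s * e_t = c • e_(s ∆ t)` for a scalar `c`, since the generators anticommute and square to
scalars. So `p (e_s * e_t) = 0 = p (e_t * e_s)` unless `s = t`: the bilinear forms
`(x, y) ↦ p (x y)` and `(x, y) ↦ p (y x)` agree on the monomial basis, hence everywhere. -/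

section Monomials

variable {F V : Type*} [Field F] [AddCommGroup V] [Module F V]
  {Qf : QuadraticForm F V} {n : ℕ} {b : Module.Basis (Fin n) F V}

@[simp]
lemma eI_empty : eI Qf b ∅ = 1 := by
  simp [eI]

@[simp]
lemma eI_singleton (i : Fin n) : eI Qf b {i} = ι Qf (b i) := by
  simp [eI]

lemma eI_insert_of_lt {a : Fin n} {s : Finset (Fin n)} (ha : ∀ x ∈ s, a < x) :
    eI Qf b (insert a s) = ι Qf (b a) * eI Qf b s := by
  have has : a ∉ s := fun h => lt_irrefl a (ha a h)
  rw [eI, Finset.sort_insert _ (fun x hx => (ha x hx).le) has, List.map_cons, List.prod_cons]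
  rfl

variable (hb : Pairwise fun i j => Qf.IsOrtho (b i) (b j))
include hb

lemma exists_ι_mul_eI_eq_smul (i : Fin n) (s : Finset (Fin n)) :
    ∃ c : F, ι Qf (b i) * eI Qf b s = c • eI Qf b (symmDiff {i} s) := by
  induction s using Finset.induction_on_min with
  | empty =>
    exact ⟨1, by simp [symmDiff_def]⟩
  | insert a s ha ih =>
    rcases lt_trichotomy i a with hia | rfl | hai
    · have hi : ∀ x ∈ insert a s, i < x := by
        simpa [hia] using fun x hx => hia.trans (ha x hx)
      have hsd : symmDiff {i} (insert a s) = insert i (insert a s) := by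
        ext x; grind [Finset.mem_symmDiff]
      exact ⟨1, by rw [hsd, one_smul, eI_insert_of_lt hi]⟩
    · have hsd : symmDiff {i} (insert i s) = s := by
        ext x; grind [Finset.mem_symmDiff]
      refine ⟨Qf (b i), ?_⟩
      rw [hsd, eI_insert_of_lt ha, ← mul_assoc, ι_sq_scalar, ← Algebra.smul_def]
    · obtain ⟨c, hc⟩ := ih
      have hsd : symmDiff {i} (insert a s) = insert a (symmDiff {i} s) := by
        ext x; grind [Finset.mem_symmDiff]
      have ha' : ∀ x ∈ symmDiff {i} s, a < x := by
        grind [Finset.mem_symmDiff]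
      refine ⟨-c, ?_⟩
      calc ι Qf (b i) * eI Qf b (insert a s)
          = -(ι Qf (b a) * (ι Qf (b i) * eI Qf b s)) := by
            rw [eI_insert_of_lt ha, ← mul_assoc, ι_mul_ι_comm_of_isOrtho (hb hai.ne'),
              neg_mul, mul_assoc]
        _ = -c • eI Qf b (symmDiff {i} (insert a s)) := by
            rw [hc, mul_smul_comm, hsd, eI_insert_of_lt ha', neg_smul]

lemma exists_eI_mul_eI_eq_smul (s t : Finset (Fin n)) :
    ∃ c : F, eI Qf b s * eI Qf b t = c • eI Qf b (symmDiff s t) := by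
  induction s using Finset.induction_on_min with
  | empty => exact ⟨1, by simp [symmDiff_def]⟩
  | insert a s ha ih =>
    obtain ⟨c, hc⟩ := ih
    obtain ⟨c', hc'⟩ := exists_ι_mul_eI_eq_smul hb a (symmDiff s t)
    have hsd : symmDiff (insert a s) t = symmDiff {a} (symmDiff s t) := by
      ext x; grind [Finset.mem_symmDiff]
    refine ⟨c * c', ?_⟩
    rw [eI_insert_of_lt ha, mul_assoc, hc, mul_smul_comm, hc', smul_smul, hsd]

lemma coord_empty_eI_mul_eI_comm (bas : Module.Basis (Finset (Fin n)) F (CliffordAlgebra Qf))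
    (hbas : ∀ s : Finset (Fin n), bas s = eI Qf b s) (s t : Finset (Fin n)) :
    bas.coord ∅ (eI Qf b s * eI Qf b t) = bas.coord ∅ (eI Qf b t * eI Qf b s) := by
  rcases eq_or_ne s t with rfl | hst
  · rfl
  have coord_smul_eI (c : F) {u : Finset (Fin n)} (hu : u ≠ ∅) :
      bas.coord ∅ (c • eI Qf b u) = 0 := by
    rw [← hbas, map_smul, Module.Basis.coord_apply, Module.Basis.repr_self,
      Finsupp.single_eq_of_ne hu.symm, smul_zero]
  obtain ⟨c, hc⟩ := exists_eI_mul_eI_eq_smul hb s t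
  obtain ⟨c', hc'⟩ := exists_eI_mul_eI_eq_smul hb t s
  rw [hc, hc', coord_smul_eI c (symmDiff_eq_bot.not.mpr hst),
    coord_smul_eI c' (symmDiff_eq_bot.not.mpr hst.symm)]

theorem coord_empty_mul_comm (bas : Module.Basis (Finset (Fin n)) F (CliffordAlgebra Qf))
    (hbas : ∀ s : Finset (Fin n), bas s = eI Qf b s) (x y : CliffordAlgebra Qf) :
    bas.coord ∅ (x * y) = bas.coord ∅ (y * x) := by
  have h : (LinearMap.mul F _).compr₂ (bas.coord ∅) =
      (LinearMap.mul F _).flip.compr₂ (bas.coord ∅) :=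
    LinearMap.ext_basis bas bas fun s t => by
      simpa [hbas] using coord_empty_eI_mul_eI_comm hb bas hbas s t
  simpa using LinearMap.congr_fun₂ h x y

end Monomials

theorem stmt8_general {F V : Type*} [Field F] [AddCommGroup V] [Module F V]
    (B : LinearMap.BilinForm F V)
    (Qf : QuadraticForm F V) (hQ : ∀ v : V, Qf v = -(B v v))
    {n : ℕ} (b : Module.Basis (Fin n) F V)
    (hortho : ∀ i j : Fin n, i ≠ j → B (b i) (b j) = 0)
    (bas : Module.Basis (Finset (Fin n)) F (CliffordAlgebra Qf))
    (hbas : ∀ s : Finset (Fin n), bas s = eI Qf b s) :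
    ∀ x y : CliffordAlgebra Qf, bas.coord ∅ (x * y) = bas.coord ∅ (y * x) := by
  have hb : Pairwise fun i j => Qf.IsOrtho (b i) (b j) := fun i j hij => by
    simp only [QuadraticMap.isOrtho_def, hQ, map_add, LinearMap.add_apply, hortho i j hij,
      hortho j i hij.symm, add_zero, zero_add, neg_add_rev]
    ring
  exact coord_empty_mul_comm hb bas hbas

theorem stmt8 {F V : Type*} [Field F] [AddCommGroup V] [Module F V]
    [FiniteDimensional F V] (h2 : (2 : F) ≠ 0)
    (B : LinearMap.BilinForm F V)
    (hsymm : ∀ v w : V, B v w = B w v)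
    (hnd : ∀ v : V, (∀ w : V, B v w = 0) → v = 0)
    (Qf : QuadraticForm F V) (hQ : ∀ v : V, Qf v = -(B v v))
    {n : ℕ} (b : Module.Basis (Fin n) F V)
    (hortho : ∀ i j : Fin n, i ≠ j → B (b i) (b j) = 0)
    (bas : Module.Basis (Finset (Fin n)) F (CliffordAlgebra Qf))
    (hbas : ∀ s : Finset (Fin n), bas s = eI Qf b s) :
    ∀ x y : CliffordAlgebra Qf, bas.coord ∅ (x * y) = bas.coord ∅ (y * x) :=
  stmt8_general B Qf hQ b hortho bas hbas
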